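/- Suppose W_min > C_1, B_• is a 1-feasible partition, bin B_1 contains at least one ball of weight w_1, and g_i(B_•) = C_i − w(B_i) ≥ w_1 for some i ≥ 2. Then there exists a 1-feasible partition B'_• with w(B'_1) < w(B_1); consequently w(B_1) > W_min. -/

import Mathlib

def ValidPartition (n d : ℕ) (m : ℕ → ℕ → ℕ) : Prop :=
  (∀ i ∈ Finset.Icc 1 n, ∑ j ∈ Finset.Icc 1 n, m i j = d) ∧
  (∀ j ∈ Finset.Icc 1 n, ∑ i ∈ Finset.Icc 1 n, m i j = d)

def binWeight (n : ℕ) (w : ℕ → ℕ) (m : ℕ → ℕ → ℕ) (j : ℕ) : ℕ :=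
  ∑ i ∈ Finset.Icc 1 n, m i j * w i

def OneFeasible (n d : ℕ) (w : ℕ → ℕ) (C : ℕ → ℤ) (m : ℕ → ℕ → ℕ) : Prop :=
  ValidPartition n d m ∧ ∀ j ∈ Finset.Icc 2 n, (binWeight n w m j : ℤ) ≤ C j

/-!
Swap a heaviest ball `w₁` of bin `1` with a lighter ball of bin `i`. Such a ball exists: if all
balls in bin `i` weighed `w₁`, then `w(Bᵢ) ≥ d w₁ ≥ w(B₁) > C₁ ≥ Cᵢ`, against feasibility. The swap
keeps every row and column sum, lowers `w(B₁)` by `w₁ - wⱼ > 0`, and raises `w(Bᵢ)` by the same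
amount, which the gap `Cᵢ - w(Bᵢ) ≥ w₁` absorbs.
-/

open Finset

lemma antitoneOn_Icc_of_succ_le {β : Type*} [Preorder β] {f : ℕ → β} {a b : ℕ}
    (hf : ∀ i, a ≤ i → i < b → f (i + 1) ≤ f i) : AntitoneOn f (Set.Icc a b) :=
  antitoneOn_of_succ_le Set.ordConnected_Icc fun i _ hi hsi => by
    rw [Order.succ_eq_add_one] at hsi ⊢
    exact hf i hi.1 (Nat.lt_of_succ_le hsi.2)

def indicatorDiff (a b x : ℕ) : ℤ := (if x = a then 1 else 0) - (if x = b then 1 else 0)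

@[simp] lemma indicatorDiff_left {a b : ℕ} (h : a ≠ b) : indicatorDiff a b a = 1 := by
  simp [indicatorDiff, h]

@[simp] lemma indicatorDiff_right {a b : ℕ} (h : a ≠ b) : indicatorDiff a b b = -1 := by
  simp [indicatorDiff, h.symm]

lemma indicatorDiff_of_ne {a b x : ℕ} (ha : x ≠ a) (hb : x ≠ b) : indicatorDiff a b x = 0 := by
  simp [indicatorDiff, ha, hb]

lemma sum_indicatorDiff_mul {s : Finset ℕ} {a b : ℕ} (ha : a ∈ s) (hb : b ∈ s) (f : ℕ → ℤ) :
    ∑ x ∈ s, indicatorDiff a b x * f x = f a - f b := by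
  simp only [indicatorDiff, sub_mul, ite_mul, one_mul, zero_mul, sum_sub_distrib,
    sum_ite_eq', ha, hb, if_true]

lemma sum_indicatorDiff {s : Finset ℕ} {a b : ℕ} (ha : a ∈ s) (hb : b ∈ s) :
    ∑ x ∈ s, indicatorDiff a b x = 0 := by
  simpa using sum_indicatorDiff_mul ha hb 1

/-- Move a ball of weight index `a` from bin `b` to bin `b'` and one of weight index `a'` from
`b'` to `b`: the perturbation is the rank-one matrix `(e_a - e_a') ⊗ (e_b' - e_b)`. -/
def swapBalls (m : ℕ → ℕ → ℕ) (a b a' b' : ℕ) (x y : ℕ) : ℕ :=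
  (m x y + indicatorDiff a a' x * indicatorDiff b' b y).toNat

section swapBalls

variable {m : ℕ → ℕ → ℕ} {a b a' b' : ℕ}

lemma natCast_swapBalls (h : 0 < m a b) (h' : 0 < m a' b') (x y : ℕ) :
    (swapBalls m a b a' b' x y : ℤ) = m x y + indicatorDiff a a' x * indicatorDiff b' b y := by
  refine Int.toNat_of_nonneg ?_
  unfold indicatorDiff
  split_ifs <;> subst_vars <;> omega

lemma ValidPartition.swapBalls {n d : ℕ} (hm : ValidPartition n d m)
    (ha : a ∈ Icc 1 n) (ha' : a' ∈ Icc 1 n) (hb : b ∈ Icc 1 n) (hb' : b' ∈ Icc 1 n)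
    (h : 0 < m a b) (h' : 0 < m a' b') : ValidPartition n d (swapBalls m a b a' b') := by
  constructor
  · intro x hx
    zify
    simp only [natCast_swapBalls h h', sum_add_distrib, ← mul_sum, sum_indicatorDiff hb' hb,
      mul_zero, add_zero]
    exact_mod_cast hm.1 x hx
  · intro y hy
    zify
    simp only [natCast_swapBalls h h', sum_add_distrib, ← sum_mul, sum_indicatorDiff ha ha',
      zero_mul, add_zero]
    exact_mod_cast hm.2 y hy

lemma binWeight_swapBalls {n : ℕ} (w : ℕ → ℕ) (ha : a ∈ Icc 1 n) (ha' : a' ∈ Icc 1 n)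
    (h : 0 < m a b) (h' : 0 < m a' b') (y : ℕ) :
    (binWeight n w (swapBalls m a b a' b') y : ℤ) =
      binWeight n w m y + indicatorDiff b' b y * (w a - w a') := by
  unfold binWeight
  push_cast
  simp only [natCast_swapBalls h h', add_mul, sum_add_distrib]
  rw [← sum_indicatorDiff_mul ha ha' (fun x => (w x : ℤ)), mul_sum]
  congr 1
  exact sum_congr rfl fun x _ => by ring

end swapBalls

section binWeight

variable {n d c j : ℕ} {w : ℕ → ℕ} {m : ℕ → ℕ → ℕ}

lemma binWeight_le_mul (hcol : ∑ a ∈ Icc 1 n, m a j = d) (hw : ∀ a ∈ Icc 1 n, w a ≤ c) :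
    binWeight n w m j ≤ d * c := by
  rw [binWeight, ← hcol, sum_mul]
  exact sum_le_sum fun a ha => Nat.mul_le_mul_left _ (hw a ha)

lemma exists_lt_of_binWeight_lt (hcol : ∑ a ∈ Icc 1 n, m a j = d)
    (h : binWeight n w m j < d * c) : ∃ a ∈ Icc 1 n, 0 < m a j ∧ w a < c := by
  by_contra! hall
  refine h.not_ge ?_
  rw [binWeight, ← hcol, sum_mul]
  refine sum_le_sum fun a ha => ?_
  rcases (m a j).eq_zero_or_pos with h0 | hpos
  · simp [h0]
  · exact Nat.mul_le_mul_left _ (hall a ha hpos)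

end binWeight

theorem exists_better_partition_of_large_gap_general
    (n d : ℕ)
    (w : ℕ → ℕ) (C : ℕ → ℤ)
    (hw : ∀ i, 1 ≤ i → i < n → w (i + 1) ≤ w i)
    (hC : ∀ i, 1 ≤ i → i < n → C (i + 1) ≤ C i)
    (hWmin : ∀ m' : ℕ → ℕ → ℕ, OneFeasible n d w C m' →
      (C 1 < (binWeight n w m' 1 : ℤ)))
    (m : ℕ → ℕ → ℕ) (hm : OneFeasible n d w C m)
    (hball : ∃ i' ∈ Finset.Icc 1 n, w i' = w 1 ∧ 0 < m i' 1)
    (hgap : ∃ i ∈ Finset.Icc 2 n, (w 1 : ℤ) ≤ C i - (binWeight n w m i : ℤ)) :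
    ∃ m' : ℕ → ℕ → ℕ, OneFeasible n d w C m' ∧
      binWeight n w m' 1 < binWeight n w m 1 := by
  obtain ⟨i', hi', hwi', hmi'⟩ := hball
  obtain ⟨i, hi, hgap⟩ := hgap
  obtain ⟨hi2, hin⟩ := mem_Icc.mp hi
  have h1Bins : 1 ∈ Icc 1 n := mem_Icc.mpr ⟨le_rfl, by omega⟩
  have hiBins : i ∈ Icc 1 n := mem_Icc.mpr ⟨by omega, hin⟩
  have hlight : ∃ j ∈ Icc 1 n, 0 < m j i ∧ w j < w 1 := by
    refine exists_lt_of_binWeight_lt (hm.1.2 i hiBins) ?_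
    have hB1 : binWeight n w m 1 ≤ d * w 1 := binWeight_le_mul (hm.1.2 1 h1Bins) fun a ha =>
      antitoneOn_Icc_of_succ_le hw (mem_Icc.mp h1Bins) (mem_Icc.mp ha) (mem_Icc.mp ha).1
    have hCi : C i ≤ C 1 :=
      antitoneOn_Icc_of_succ_le hC (mem_Icc.mp h1Bins) (mem_Icc.mp hiBins) (by omega)
    have hC1 := hWmin m hm
    have hBi := hm.2 i hi
    omega
  obtain ⟨j, hj, hmj, hwj⟩ := hlight
  have hweight := binWeight_swapBalls w hi' hj hmi' hmj
  refine ⟨swapBalls m i' 1 j i,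
    ⟨hm.1.swapBalls hi' hj h1Bins hiBins hmi' hmj, fun c hc => ?_⟩, ?_⟩
  · have hc1 : c ≠ 1 := by have := (mem_Icc.mp hc).1; omega
    rw [hweight]
    by_cases hci : c = i
    · rw [hci, indicatorDiff_left (hci ▸ hc1)]
      omega
    · rw [indicatorDiff_of_ne hci hc1, zero_mul, add_zero]
      exact hm.2 c hc
  · have hB1 := hweight 1
    rw [indicatorDiff_right (by omega)] at hB1
    omega

/-- Lemma 2.5: if `W_min > C_1` (every 1-feasible partition exceeds
`C_1` in bin 1), `B_•` is 1-feasible, bin `B_1` contains a ball of weight `w_1`, and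
`g_i(B_•) = C_i − w(B_i) ≥ w_1` for some `i ≥ 2`, then there is a 1-feasible
partition `B'_•` with `w(B'_1) < w(B_1)`. -/
theorem exists_better_partition_of_large_gap
    (n d : ℕ) (hn : 1 ≤ n) (hd : 1 ≤ d)
    (w : ℕ → ℕ) (C : ℕ → ℤ)
    (hw : ∀ i, 1 ≤ i → i < n → w (i + 1) ≤ w i)
    (hC : ∀ i, 1 ≤ i → i < n → C (i + 1) ≤ C i)
    (hWmin : ∀ m' : ℕ → ℕ → ℕ, OneFeasible n d w C m' →
      (C 1 < (binWeight n w m' 1 : ℤ)))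
    (m : ℕ → ℕ → ℕ) (hm : OneFeasible n d w C m)
    (hball : ∃ i' ∈ Finset.Icc 1 n, w i' = w 1 ∧ 0 < m i' 1)
    (hgap : ∃ i ∈ Finset.Icc 2 n, (w 1 : ℤ) ≤ C i - (binWeight n w m i : ℤ)) :
    ∃ m' : ℕ → ℕ → ℕ, OneFeasible n d w C m' ∧
      binWeight n w m' 1 < binWeight n w m 1 :=
  exists_better_partition_of_large_gap_general n d w C hw hC hWmin m hm hball hgap
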